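/- Let W ⊆ (ℝmax^n)^2 be either a closed congruence or a closed polar cone. Then for every g ∈ ℝmax^n and every β ∈ ℝmax with g_i ≤ β for all i, one has (ḡ^β, g) ∈ W. -/

import Mathlib

open scoped Classical

noncomputable section

/-- The max-plus semiring `ℝmax = ℝ ∪ {-∞}`. Its `Add` is the max-plus
"multiplication" `a ⊗ b = a + b` (with `-∞` absorbing), its `max` is the
max-plus "addition". -/
abbrev Rmax := WithBot ℝ

/-- The order topology on `WithBot ℝ` (the topology of the metric
`d(a,b) = |exp a - exp b|`). -/
instance : TopologicalSpace Rmax := Preorder.topology Rmax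
instance : OrderTopology Rmax := ⟨rfl⟩

/-- Vectors of the max-plus semimodule `ℝmax^n`. -/
abbrev RmaxVec (n : ℕ) := Fin n → Rmax

/-- The max-plus linear combination `xλ ⊕ yμ`. -/
def maxComb {n : ℕ} (x y : RmaxVec n) (lam mu : Rmax) : RmaxVec n :=
  fun i => max (x i + lam) (y i + mu)

/-- `V ⊆ ℝmax^n` is a (max-plus) subsemimodule. -/
def IsSubsemimodule {n : ℕ} (V : Set (RmaxVec n)) : Prop :=
  ∀ x ∈ V, ∀ y ∈ V, ∀ lam mu : Rmax, maxComb x y lam mu ∈ V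

/-- `W ⊆ (ℝmax^n)² ≅ ℝmax^{2n}` is a (max-plus) subsemimodule,
with the entrywise operations. -/
def IsSubsemimodulePair {n : ℕ} (W : Set (RmaxVec n × RmaxVec n)) : Prop :=
  ∀ p ∈ W, ∀ q ∈ W, ∀ lam mu : Rmax,
    (maxComb p.1 q.1 lam mu, maxComb p.2 q.2 lam mu) ∈ W

/-- A pre-congruence: a subsemimodule of `(ℝmax^n)²` containing the diagonal
and transitive. -/
def IsPrecongruence {n : ℕ} (W : Set (RmaxVec n × RmaxVec n)) : Prop :=
  IsSubsemimodulePair W ∧ (∀ f : RmaxVec n, (f, f) ∈ W) ∧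
    ∀ f g h : RmaxVec n, (f, g) ∈ W → (g, h) ∈ W → (f, h) ∈ W

/-- A polar cone: a pre-congruence such that `f ≤ g` implies `(f,g) ∈ W`. -/
def IsPolarCone {n : ℕ} (W : Set (RmaxVec n × RmaxVec n)) : Prop :=
  IsPrecongruence W ∧ ∀ f g : RmaxVec n, f ≤ g → (f, g) ∈ W

/-- A congruence: a symmetric pre-congruence. -/
def IsCongruence {n : ℕ} (W : Set (RmaxVec n × RmaxVec n)) : Prop :=
  IsPrecongruence W ∧ ∀ f g : RmaxVec n, (f, g) ∈ W → (g, f) ∈ W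

/-- The max-plus bracket `⟨y, x⟩ = max_i (y_i + x_i)`. -/
def mpBracket {n : ℕ} (y x : RmaxVec n) : Rmax :=
  Finset.univ.sup fun i => y i + x i

/-- The polar `V°` of `V ⊆ ℝmax^n`. -/
def mpPolar {n : ℕ} (V : Set (RmaxVec n)) : Set (RmaxVec n × RmaxVec n) :=
  { p | ∀ x ∈ V, mpBracket p.1 x ≤ mpBracket p.2 x }

/-- The orthogonal `V⊥` of `V ⊆ ℝmax^n`. -/
def mpOrtho {n : ℕ} (V : Set (RmaxVec n)) : Set (RmaxVec n × RmaxVec n) :=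
  { p | ∀ x ∈ V, mpBracket p.1 x = mpBracket p.2 x }

/-- The dual polar `W⋄` of `W ⊆ (ℝmax^n)²`. -/
def mpDiamond {n : ℕ} (W : Set (RmaxVec n × RmaxVec n)) : Set (RmaxVec n) :=
  { x | ∀ p ∈ W, mpBracket p.1 x ≤ mpBracket p.2 x }

/-- The dual orthogonal `W⊤` of `W ⊆ (ℝmax^n)²`. -/
def mpTop {n : ℕ} (W : Set (RmaxVec n × RmaxVec n)) : Set (RmaxVec n) :=
  { x | ∀ p ∈ W, mpBracket p.1 x = mpBracket p.2 x }

/-- The canonical embedding of `ℝmax = ℝ ∪ {-∞}` into `EReal = ℝ ∪ {±∞}`. -/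
def toE : Rmax → EReal := WithBot.recBotCoe ⊥ (fun x => (x : EReal))

/-- The entrywise supremum `ḡ ∈ EReal^n` of `{ f | (f,g) ∈ W }`,
computed in `EReal`. -/
def ebar {n : ℕ} (W : Set (RmaxVec n × RmaxVec n)) (g : RmaxVec n) :
    Fin n → EReal :=
  fun i => sSup { a : EReal | ∃ f : RmaxVec n, (f, g) ∈ W ∧ a = toE (f i) }

/-- The residuation `u∖x = sSup { λ | ∀ i, u_i + λ ≤ x_i }` in `EReal`. -/
def eres {n : ℕ} (u x : Fin n → EReal) : EReal :=
  sSup { lam : EReal | ∀ i, u i + lam ≤ x i }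

/-- `z^β`: the vector in `ℝmax^n` obtained from `z ∈ EReal^n` by replacing the
entries equal to `+∞` by `β` and keeping the other entries. -/
def cut {n : ℕ} (z : Fin n → EReal) (b : Rmax) : RmaxVec n :=
  fun i => if z i = ⊤ then b else if z i = ⊥ then ⊥ else ((z i).toReal : ℝ)


/-! The class `S = {f | (f, g) ∈ W}` is closed, closed under `⊕`, and order-convex (even a lower
set when `W` is a polar cone). Since `g ≤ β`, also `g ≤ ḡ^β`, and every coordinate of `ḡ^β` is
approached from below by elements of `S`; truncating them to `(f ⊔ g) ⊓ ḡ^β` keeps them in `S`,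
so `ḡ^β` is the supremum of a directed subset of `S`, hence a limit of it by monotone convergence
in the product order topology. -/

open Set Filter

theorem IsLUB.mem_closure_of_directedOn {α : Type*} [Preorder α] [TopologicalSpace α]
    [SupConvergenceClass α] {s : Set α} {a : α} (ha : IsLUB s a) (hs : s.Nonempty)
    (hd : DirectedOn (· ≤ ·) s) : a ∈ closure s := by
  have : Nonempty s := hs.to_subtype
  have := hd.isDirectedOrder
  exact mem_closure_of_tendsto (SupConvergenceClass.tendsto_coe_atTop_isLUB a s ha)
    (Eventually.of_forall Subtype.prop)

/-- The truncations `(f ⊔ g) ⊓ c` stay in `S` by order-convexity, so the elements of `S` below `c`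
form a directed set with supremum `c`. -/
theorem IsClosed.mem_of_forall_lt_exists_lt {ι : Type*} {α : ι → Type*}
    [∀ i, LinearOrder (α i)] [∀ i, TopologicalSpace (α i)] [∀ i, OrderTopology (α i)]
    {S : Set (∀ i, α i)} (hS : IsClosed S) (hsup : SupClosed S) (hconv : S.OrdConnected)
    {g c : ∀ i, α i} (hg : g ∈ S) (hgc : g ≤ c) (happrox : ∀ i, ∀ a < c i, ∃ f ∈ S, a < f i) :
    c ∈ S := by
  have hlub : IsLUB (S ∩ Iic c) c := by
    refine ⟨fun f hf => hf.2, fun u hu i => le_of_forall_lt fun a ha => ?_⟩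
    obtain ⟨f, hfS, hfa⟩ := happrox i a ha
    have hv : (f ⊔ g) ⊓ c ∈ S ∩ Iic c :=
      ⟨hconv.out hg (hsup hfS hg) ⟨le_inf le_sup_right hgc, inf_le_left⟩, mem_Iic.2 inf_le_right⟩
    exact (lt_min (hfa.trans_le le_sup_left) ha).trans_le (hu hv i)
  have hIic : SupClosed (Iic c) := fun _ ha _ hb => mem_Iic.2 (sup_le ha hb)
  exact closure_minimal inter_subset_left hS <|
    hlub.mem_closure_of_directedOn ⟨g, hg, hgc⟩ (hsup.inter hIic).directedOn

section Precongruence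

variable {n : ℕ} {W : Set (RmaxVec n × RmaxVec n)}

lemma maxComb_zero_zero (x y : RmaxVec n) : maxComb x y 0 0 = x ⊔ y := by
  funext i
  simp [maxComb]

lemma IsSubsemimodulePair.sup_mem (hW : IsSubsemimodulePair W) {p q : RmaxVec n × RmaxVec n}
    (hp : p ∈ W) (hq : q ∈ W) : p ⊔ q ∈ W := by
  have h := hW p hp q hq 0 0
  rw [maxComb_zero_zero, maxComb_zero_zero] at h
  exact h

lemma IsPrecongruence.supClosed_fiber (hW : IsPrecongruence W) (g : RmaxVec n) :
    SupClosed {f | (f, g) ∈ W} := fun f₁ h₁ f₂ h₂ => by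
  have h := hW.1.sup_mem h₁ h₂
  rwa [Prod.mk_sup_mk, sup_idem] at h

lemma IsPolarCone.isLowerSet_fiber (hW : IsPolarCone W) (g : RmaxVec n) :
    IsLowerSet {f | (f, g) ∈ W} := fun f v hvf hf =>
  hW.1.2.2 v f g (hW.2 v f hvf) hf

lemma IsCongruence.ordConnected_fiber (hW : IsCongruence W) (g : RmaxVec n) :
    {f | (f, g) ∈ W}.OrdConnected := by
  refine ⟨fun f₁ h₁ f₂ h₂ v ⟨h₁v, hv₂⟩ => ?_⟩
  have h₁₂ : (f₁, f₂) ∈ W := hW.1.2.2 _ _ _ h₁ (hW.2 _ _ h₂)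
  have hv₂W : (v, f₂) ∈ W := by
    simpa [sup_eq_right.2 h₁v, sup_eq_left.2 hv₂] using hW.1.1.sup_mem h₁₂ (hW.1.2.1 v)
  exact hW.1.2.2 _ _ _ hv₂W h₂

end Precongruence

@[simp]
lemma toE_bot : toE ⊥ = ⊥ := rfl

@[simp]
lemma toE_coe (x : ℝ) : toE x = x := rfl

lemma toE_le_toE {a b : Rmax} : toE a ≤ toE b ↔ a ≤ b := by
  induction a using WithBot.recBotCoe <;> induction b using WithBot.recBotCoe <;> simp

lemma toE_lt_toE {a b : Rmax} : toE a < toE b ↔ a < b := by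
  induction a using WithBot.recBotCoe <;> induction b using WithBot.recBotCoe <;> simp

section Ebar

variable {n : ℕ} {W : Set (RmaxVec n × RmaxVec n)} {f g : RmaxVec n}

lemma toE_le_ebar (h : (f, g) ∈ W) (i : Fin n) : toE (f i) ≤ ebar W g i :=
  le_sSup ⟨f, h, rfl⟩

lemma exists_lt_of_toE_lt_ebar {a : Rmax} {i : Fin n} (h : toE a < ebar W g i) :
    ∃ f, (f, g) ∈ W ∧ a < f i := by
  obtain ⟨_, ⟨f, hf, rfl⟩, hlt⟩ := lt_sSup_iff.1 h
  exact ⟨f, hf, toE_lt_toE.1 hlt⟩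

end Ebar

lemma toE_cut_le {n : ℕ} (z : Fin n → EReal) (b : Rmax) (i : Fin n) : toE (cut z b i) ≤ z i := by
  unfold cut
  split_ifs with htop hbot
  · exact htop ▸ le_top
  · exact hbot ▸ le_rfl
  · exact (EReal.coe_toReal htop hbot).le

lemma le_cut {n : ℕ} {z : Fin n → EReal} {g : RmaxVec n} {b : Rmax}
    (hz : ∀ i, toE (g i) ≤ z i) (hb : ∀ i, g i ≤ b) : g ≤ cut z b := by
  intro i
  unfold cut
  split_ifs with htop hbot
  · exact hb i
  · exact toE_le_toE (b := ⊥) |>.1 ((hz i).trans_eq hbot)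
  · rw [← toE_le_toE]
    exact (hz i).trans_eq (EReal.coe_toReal htop hbot).symm

/-- Corollary 4.3 of the paper: if `W ⊆ (ℝmax^n)²` is a closed congruence or a
closed polar cone, `g ∈ ℝmax^n`, and `β ≥ g_i` for all `i`, then
`(ḡ^β, g) ∈ W`. -/
theorem ebar_cut_mem (n : ℕ) (W : Set (RmaxVec n × RmaxVec n))
    (hclosed : IsClosed W) (hW : IsCongruence W ∨ IsPolarCone W)
    (g : RmaxVec n) (β : Rmax) (hβ : ∀ i, g i ≤ β) :
    (cut (ebar W g) β, g) ∈ W := by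
  have hpre : IsPrecongruence W := hW.elim (·.1) (·.1)
  have hg : (g, g) ∈ W := hpre.2.1 g
  have hconv : {f | (f, g) ∈ W}.OrdConnected :=
    hW.elim (·.ordConnected_fiber g) fun hP => (hP.isLowerSet_fiber g).ordConnected
  refine (hclosed.preimage (Continuous.prodMk_left g)).mem_of_forall_lt_exists_lt
    (hpre.supClosed_fiber g) hconv hg (le_cut (toE_le_ebar hg) hβ) fun i a ha => ?_
  exact exists_lt_of_toE_lt_ebar ((toE_lt_toE.2 ha).trans_le (toE_cut_le _ _ i))
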